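/- arXiv:1208.5010 — 5 statements merged into one kernel-verified Lean document; each statement's English description precedes it below -/
import Mathlib

section
/- Let $X$, $Y$ be finite-dimensional real inner product spaces. Let $b : X \times Y \to \mathbb{R}$ satisfy the inf-sup condition with constant $\beta > 0$, let $a : X \times X \to \mathbb{R}$ be bounded (constant $\gamma_a$), coercive (constant $\alpha_a > 0$), and symmetric, and let $m$ be an inner product on $X$ with $m(u,v) \leq \gamma_m \|u\|_X\|v\|_X$. Suppose $e \in X$, $e' \in X$, $p \in Y$, $\Delta t > 0$, and functionals $r^1 \in X'$, $r^2 \in Y'$ satisfy: $\tfrac{1}{\Delta t}m(e - e', v) + a(e,v) + b(v,p) = r^1(v)$ for all $v \in X$ and $b(e, q) = r^2(q)$ for all $q \in Y$. Then, with $\|e\|_a = \sqrt{a(e,e)}$ and $\|w\|_m = \sqrt{m(w,w)}$, one has $\tfrac{1}{\Delta t}(\|e\|_m^2 - \|e'\|_m^2) + \|e\|_a^2 \leq \tfrac{\|r^1\|_{X'}^2}{\alpha_a} + \tfrac{2}{\beta}\big(1 + \sqrt{\tfrac{\gamma_a}{\alpha_a}}\big)\|r^1\|_{X'}\|r^2\|_{Y'}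 + \big(\tfrac{\gamma_m}{\Delta t} + \gamma_a\big)\tfrac{\|r^2\|_{Y'}^2}{\beta^2}$. -/
/-!
By the inf-sup condition the Riesz map `R : Y → X`, `⟪R q, v⟫ = b(v, q)`, satisfies
`β‖q‖ ≤ ‖R q‖`, so `q ↦ b(R q, ·)` is injective, hence onto `Y'`. This yields `w = R q` with
`b(w, ·) = r2` and `‖w‖² = r2(q) ≤ ‖r2‖‖w‖/β`. As `b(e - w, p) = 0`, testing the first equation
with `e - w` removes the pressure, and the polarisation
`2 m(e - e', e) = ‖e‖²_m - ‖e'‖²_m + ‖e - e'‖²_m` turns it into an energy identity whose terms in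
`w` are absorbed by Young's inequality in the `m`-norm and by Cauchy–Schwarz and Young in the
`a`-norm.
-/

open Real

namespace LinearMap.BilinForm

theorem two_mul_apply_le_add_of_symm {R M : Type*} [CommRing R] [LinearOrder R]
    [IsStrictOrderedRing R] [AddCommGroup M] [Module R M] (B : LinearMap.BilinForm R M)
    (hsym : ∀ u v, B u v = B v u) (hB_nonneg : ∀ v, 0 ≤ B v v) (u v : M) :
    2 * B u v ≤ B u u + B v v := by
  have h := hB_nonneg (u - v)
  simp only [map_sub, LinearMap.sub_apply] at h
  linarith [hsym u v]

theorem apply_le_sqrt_mul_sqrt {M : Type*} [AddCommGroup M] [Module ℝ M]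
    (B : LinearMap.BilinForm ℝ M) (hsym : ∀ u v, B u v = B v u) (hB_nonneg : ∀ v, 0 ≤ B v v)
    (u v : M) :
    B u v ≤ √(B u u) * √(B v v) := by
  have hcs := B.apply_mul_apply_le_of_forall_zero_le hB_nonneg u v
  rw [← hsym u v, ← sq] at hcs
  rw [← sqrt_mul (hB_nonneg u)]
  exact le_sqrt_of_sq_le hcs

end LinearMap.BilinForm

section InfSup

variable {X Y : Type*} [NormedAddCommGroup X] [InnerProductSpace ℝ X]

theorem innerₗ_nondegenerate : (innerₗ X : LinearMap.BilinForm ℝ X).Nondegenerate :=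
  ⟨fun x hx => inner_self_eq_zero.mp (hx x), fun y hy => inner_self_eq_zero.mp (hy y)⟩

variable [FiniteDimensional ℝ X] [NormedAddCommGroup Y] [InnerProductSpace ℝ Y]

noncomputable def rieszFlip (b : X →ₗ[ℝ] Y →ₗ[ℝ] ℝ) : Y →ₗ[ℝ] X :=
  (LinearMap.BilinForm.toDual (innerₗ X) innerₗ_nondegenerate).symm.toLinearMap ∘ₗ b.flip

theorem inner_rieszFlip (b : X →ₗ[ℝ] Y →ₗ[ℝ] ℝ) (q : Y) (v : X) :
    inner ℝ (rieszFlip b q) v = b v q :=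
  LinearMap.BilinForm.apply_toDual_symm_apply (hB := innerₗ_nondegenerate) (b.flip q) v

theorem mul_norm_le_norm_rieszFlip (b : X →ₗ[ℝ] Y →ₗ[ℝ] ℝ) {β : ℝ}
    (hinfsup : ∀ q : Y, β * ‖q‖ ≤ ⨆ v : {v : X // v ≠ 0}, b (v : X) q / ‖(v : X)‖) (q : Y) :
    β * ‖q‖ ≤ ‖rieszFlip b q‖ := by
  refine (hinfsup q).trans (Real.iSup_le (fun ⟨v, hv⟩ => ?_) (norm_nonneg _))
  rw [div_le_iff₀ (norm_pos_iff.mpr hv), ← inner_rieszFlip]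
  exact real_inner_le_norm _ _

theorem exists_apply_eq_and_norm_le_of_inf_sup [FiniteDimensional ℝ Y]
    (b : X →ₗ[ℝ] Y →ₗ[ℝ] ℝ) {β : ℝ} (hβ : 0 < β)
    (hinfsup : ∀ q : Y, β * ‖q‖ ≤ ⨆ v : {v : X // v ≠ 0}, b (v : X) q / ‖(v : X)‖)
    (r : Y →L[ℝ] ℝ) : ∃ w : X, (∀ q, b w q = r q) ∧ ‖w‖ ≤ ‖r‖ / β := by
  set T : Y →ₗ[ℝ] Module.Dual ℝ Y := b ∘ₗ rieszFlip b
  have hT : ∀ q, T q q = ‖rieszFlip b q‖ ^ 2 := fun q => by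
    rw [← real_inner_self_eq_norm_sq, inner_rieszFlip]; rfl
  have hT_inj : Function.Injective T := by
    refine (injective_iff_map_eq_zero T).mpr fun q hq => norm_eq_zero.mp ?_
    have h0 : rieszFlip b q = 0 := by simpa [hq] using (hT q).symm
    have hlow := mul_norm_le_norm_rieszFlip b hinfsup q
    rw [h0, norm_zero] at hlow
    nlinarith [norm_nonneg q]
  obtain ⟨q, hq⟩ := (LinearMap.injective_iff_surjective_of_finrank_eq_finrank
    Subspace.dual_finrank_eq.symm).mp hT_inj (r : Y →ₗ[ℝ] ℝ)
  refine ⟨rieszFlip b q, fun q' => LinearMap.congr_fun hq q', ?_⟩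
  have hsq : ‖rieszFlip b q‖ ^ 2 ≤ ‖r‖ * ‖q‖ := by
    rw [← hT, hq]; exact (le_norm_self _).trans (r.le_opNorm q)
  have hlow := mul_norm_le_norm_rieszFlip b hinfsup q
  have hβsq : β * ‖rieszFlip b q‖ ^ 2 ≤ ‖r‖ * ‖rieszFlip b q‖ := calc
    _ ≤ β * (‖r‖ * ‖q‖) := by gcongr
    _ = ‖r‖ * (β * ‖q‖) := by ring
    _ ≤ ‖r‖ * ‖rieszFlip b q‖ := by gcongr
  rw [le_div_iff₀ hβ]
  nlinarith [norm_nonneg r, norm_nonneg (rieszFlip b q)]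

end InfSup

theorem backwardEuler_energy_le {X Y : Type*} [AddCommGroup X] [Module ℝ X] [AddCommGroup Y]
    [Module ℝ Y] (b : X →ₗ[ℝ] Y →ₗ[ℝ] ℝ) (a m : X →ₗ[ℝ] X →ₗ[ℝ] ℝ) {Δt : ℝ} (hΔt : 0 < Δt)
    (hmsym : ∀ u v, m u v = m v u) (hm_nonneg : ∀ v, 0 ≤ m v v)
    {F : Type*} [FunLike F X ℝ] [AddMonoidHomClass F X ℝ] {e e' w : X} {p : Y} {r : F}
    (heq1 : ∀ v, (1 / Δt) * m (e - e') v + a e v + b v p = r v) (hw : b w p = b e p) :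
    (1 / Δt) * (m e e - m e' e') + 2 * a e e ≤
      2 * (r e + a e w) - 2 * r w + (1 / Δt) * m w w := by
  have htest := heq1 (e - w)
  have hyoung := mul_le_mul_of_nonneg_left
    (LinearMap.BilinForm.two_mul_apply_le_add_of_symm m hmsym hm_nonneg (e - e') w)
    (one_div_nonneg.mpr hΔt.le)
  simp only [map_sub, LinearMap.sub_apply, hw, sub_self, add_zero] at htest hyoung
  linear_combination 2 * htest + hyoung - (1 / Δt) * hmsym e e'

section CoerciveBounded

variable {X : Type*} [NormedAddCommGroup X] [NormedSpace ℝ X] (a : X →ₗ[ℝ] X →ₗ[ℝ] ℝ)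
  {αa γa : ℝ}

theorem sqrt_mul_norm_le_sqrt_apply_self (hαa : 0 ≤ αa) (hacoer : ∀ v, αa * ‖v‖ ^ 2 ≤ a v v)
    (v : X) : √αa * ‖v‖ ≤ √(a v v) := by
  rw [← sqrt_sq (norm_nonneg v), ← sqrt_mul hαa]
  exact sqrt_le_sqrt (hacoer v)

theorem sqrt_apply_self_div_le (hαa : 0 ≤ αa) (habdd : ∀ u v, a u v ≤ γa * ‖u‖ * ‖v‖) (v : X) :
    √(a v v) / √αa ≤ √(γa / αa) * ‖v‖ := by
  rw [← sqrt_div' _ hαa, ← sqrt_sq (norm_nonneg v), ← sqrt_mul' _ (sq_nonneg _)]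
  refine sqrt_le_sqrt ?_
  rw [div_mul_eq_mul_div, sq]
  gcongr
  simpa only [mul_assoc] using habdd v v

theorem two_mul_add_le_of_coercive (hasym : ∀ u v, a u v = a v u) (hαa : 0 < αa)
    (hacoer : ∀ v, αa * ‖v‖ ^ 2 ≤ a v v) (r : X →L[ℝ] ℝ) (e w : X) :
    2 * (r e + a e w) ≤ a e e + (‖r‖ / √αa + √(a w w)) ^ 2 := by
  have hpos : ∀ v, 0 ≤ a v v := fun v => (by positivity : 0 ≤ αa * ‖v‖ ^ 2).trans (hacoer v)
  have hre : r e ≤ √(a e e) * (‖r‖ / √αa) := calc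
    r e ≤ ‖r‖ * ‖e‖ := (le_norm_self _).trans (r.le_opNorm e)
    _ = ‖r‖ / √αa * (√αa * ‖e‖) := by field_simp
    _ ≤ ‖r‖ / √αa * √(a e e) := by
      gcongr; exact sqrt_mul_norm_le_sqrt_apply_self a hαa.le hacoer e
    _ = _ := mul_comm _ _
  have hae := LinearMap.BilinForm.apply_le_sqrt_mul_sqrt a hasym hpos e w
  nlinarith [two_mul_le_add_sq (√(a e e)) (‖r‖ / √αa + √(a w w)), sq_sqrt (hpos e)]

end CoerciveBounded

theorem backwardEuler_energy_le_of_lift {X Y : Type*} [NormedAddCommGroup X] [NormedSpace ℝ X]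
    [AddCommGroup Y] [Module ℝ Y] (b : X →ₗ[ℝ] Y →ₗ[ℝ] ℝ) (a m : X →ₗ[ℝ] X →ₗ[ℝ] ℝ)
    {γa αa γm Δt : ℝ} (hαa : 0 < αa) (hΔt : 0 < Δt)
    (habdd : ∀ u v : X, a u v ≤ γa * ‖u‖ * ‖v‖) (hacoer : ∀ v : X, αa * ‖v‖ ^ 2 ≤ a v v)
    (hasym : ∀ u v : X, a u v = a v u) (hmsym : ∀ u v : X, m u v = m v u)
    (hm_nonneg : ∀ v, 0 ≤ m v v) (hmbdd : ∀ u v : X, m u v ≤ γm * ‖u‖ * ‖v‖)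
    {e e' w : X} {p : Y} (r : X →L[ℝ] ℝ)
    (heq1 : ∀ v : X, (1 / Δt) * m (e - e') v + a e v + b v p = r v) (hw : b w p = b e p) :
    (1 / Δt) * (m e e - m e' e') + a e e ≤
      ‖r‖ ^ 2 / αa + 2 * (1 + √(γa / αa)) * ‖r‖ * ‖w‖ + (γm / Δt + γa) * ‖w‖ ^ 2 := by
  have henergy := backwardEuler_energy_le b a m hΔt hmsym hm_nonneg heq1 hw
  have hyoung := two_mul_add_le_of_coercive a hasym hαa hacoer r e w
  have haww : 0 ≤ a w w := (by positivity : 0 ≤ αa * ‖w‖ ^ 2).trans (hacoer w)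
  have hsq : (‖r‖ / √αa + √(a w w)) ^ 2 ≤
      ‖r‖ ^ 2 / αa + 2 * √(γa / αa) * ‖r‖ * ‖w‖ + γa * ‖w‖ ^ 2 := by
    have hcross : 2 * (‖r‖ / √αa) * √(a w w) ≤ 2 * √(γa / αa) * ‖r‖ * ‖w‖ := calc
      _ = 2 * ‖r‖ * (√(a w w) / √αa) := by ring
      _ ≤ 2 * ‖r‖ * (√(γa / αa) * ‖w‖) := by
        gcongr; exact sqrt_apply_self_div_le a hαa.le habdd w
      _ = _ := by ring
    rw [add_sq, div_pow, sq_sqrt hαa.le, sq_sqrt haww]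
    linarith [habdd w w]
  have hrw : -r w ≤ ‖r‖ * ‖w‖ := (neg_le_abs (r w)).trans (r.le_opNorm w)
  have hmww : (1 / Δt) * m w w ≤ (1 / Δt) * (γm * ‖w‖ ^ 2) := by
    gcongr
    linarith [hmbdd w w]
  linear_combination henergy + hyoung + hsq + 2 * hrw + hmww

theorem nonneg_of_le_mul_norm_mul_norm {X : Type*} [NormedAddCommGroup X] {γ c : ℝ} {v : X}
    (hv : v ≠ 0) (hc : 0 ≤ c) (hcγ : c ≤ γ * ‖v‖ * ‖v‖) : 0 ≤ γ := by
  have hv' : 0 < ‖v‖ := norm_pos_iff.mpr hv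
  rw [mul_assoc] at hcγ
  exact nonneg_of_mul_nonneg_left (hc.trans hcγ) (by positivity)

/-- Single-time-step estimate in the symmetric case (Proposition 2.2). -/
theorem stmt5 {X Y : Type*}
    [NormedAddCommGroup X] [InnerProductSpace ℝ X] [FiniteDimensional ℝ X]
    [NormedAddCommGroup Y] [InnerProductSpace ℝ Y] [FiniteDimensional ℝ Y]
    (b : X →ₗ[ℝ] Y →ₗ[ℝ] ℝ) (a m : X →ₗ[ℝ] X →ₗ[ℝ] ℝ)
    (β γa αa γm Δt : ℝ) (hβ : 0 < β) (hαa : 0 < αa) (hΔt : 0 < Δt)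
    (hinfsup : ∀ q : Y, β * ‖q‖ ≤ ⨆ v : {v : X // v ≠ 0}, b (v : X) q / ‖(v : X)‖)
    (habdd : ∀ u v : X, a u v ≤ γa * ‖u‖ * ‖v‖)
    (hacoer : ∀ v : X, αa * ‖v‖ ^ 2 ≤ a v v)
    (hasym : ∀ u v : X, a u v = a v u)
    (hmsym : ∀ u v : X, m u v = m v u)
    (hmpos : ∀ v : X, v ≠ 0 → 0 < m v v)
    (hmbdd : ∀ u v : X, m u v ≤ γm * ‖u‖ * ‖v‖)
    (e e' : X) (p : Y) (r1 : X →L[ℝ] ℝ) (r2 : Y →L[ℝ] ℝ)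
    (heq1 : ∀ v : X, (1 / Δt) * m (e - e') v + a e v + b v p = r1 v)
    (heq2 : ∀ q : Y, b e q = r2 q) :
    (1 / Δt) * (m e e - m e' e') + a e e ≤
      ‖r1‖ ^ 2 / αa + (2 / β) * (1 + Real.sqrt (γa / αa)) * ‖r1‖ * ‖r2‖ +
        (γm / Δt + γa) * ‖r2‖ ^ 2 / β ^ 2 := by
  obtain ⟨w, hw, hw_le⟩ := exists_apply_eq_and_norm_le_of_inf_sup b hβ hinfsup r2
  have hm_nonneg : ∀ v, 0 ≤ m v v := fun v => by
    rcases eq_or_ne v 0 with rfl | hv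
    · simp
    · exact (hmpos v hv).le
  have henergy := backwardEuler_energy_le_of_lift b a m hαa hΔt habdd hacoer hasym hmsym
    hm_nonneg hmbdd r1 heq1 (by rw [hw, heq2] : b w p = b e p)
  rcases eq_or_ne w 0 with rfl | hw0
  · have hr2 : r2 = 0 := ContinuousLinearMap.ext fun q => by simp [← hw q]
    simpa [hr2] using henergy
  have hγa : 0 ≤ γa := nonneg_of_le_mul_norm_mul_norm hw0
    ((by positivity : 0 ≤ αa * ‖w‖ ^ 2).trans (hacoer w)) (habdd w w)
  have hγm : 0 ≤ γm := nonneg_of_le_mul_norm_mul_norm hw0 (hm_nonneg w) (hmbdd w w)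
  calc _ ≤ _ := henergy
    _ ≤ ‖r1‖ ^ 2 / αa + 2 * (1 + √(γa / αa)) * ‖r1‖ * (‖r2‖ / β) +
        (γm / Δt + γa) * (‖r2‖ / β) ^ 2 := by gcongr
    _ = _ := by ring
end

section
/- Let $X$, $Y$ be finite-dimensional real inner product spaces, $b : X \times Y \to \mathbb{R}$ with inf-sup constant $\beta > 0$, $a : X \times X \to \mathbb{R}$ bounded (constant $\gamma_a$) and coercive (constant $\alpha_a > 0$) but not necessarily symmetric, and $m$ an inner product on $X$ with continuity constant $\gamma_m$. Suppose $e, e' \in X$, $p \in Y$, $\Delta t > 0$, $r^1 \in X'$, $r^2 \in Y'$ satisfy $\tfrac{1}{\Delta t}m(e-e',v) + a(e,v) + b(v,p) = r^1(v)$ for all $v \in X$ and $b(e,q) = r^2(q)$ for all $q \in Y$. Then $\tfrac{1}{\Delta t}(\|e\|_m^2 - \|e'\|_m^2) + a(e,e) \leq \tfrac{\|r^1\|_{X'}^2}{\alpha_a} + \tfrac{2}{\beta}\big(1 + \tfrac{\gamma_a}{\alpha_a}\big)\|r^1\|_{X'}\|r^2\|_{Y'} + \big(\tfrac{\gamma_m}{\Delta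 t} + \tfrac{\gamma_a^2}{\alpha_a}\big)\tfrac{\|r^2\|_{Y'}^2}{\beta^2}$. -/
open RealInnerProductSpace

/-- From the inf-sup condition, a right inverse lift: `w` with `b w q = r2 q` and
`‖w‖ ≤ ‖r2‖ / β`. -/
lemma exists_lift {X Y : Type*}
    [NormedAddCommGroup X] [InnerProductSpace ℝ X] [FiniteDimensional ℝ X]
    [NormedAddCommGroup Y] [InnerProductSpace ℝ Y] [FiniteDimensional ℝ Y]
    (b : X →ₗ[ℝ] Y →ₗ[ℝ] ℝ) (β : ℝ) (hβ : 0 < β)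
    (hinfsup : ∀ q : Y, β * ‖q‖ ≤ ⨆ v : {v : X // v ≠ 0}, b (v : X) q / ‖(v : X)‖)
    (r2 : Y →L[ℝ] ℝ) :
    ∃ w : X, (∀ q : Y, b w q = r2 q) ∧ ‖w‖ ≤ ‖r2‖ / β := by
  classical
  -- the "transpose" map Bt : Y →ₗ X with ⟪Bt q, v⟫ = b v q
  let Bt : Y →ₗ[ℝ] X :=
    { toFun := fun q => (InnerProductSpace.toDual ℝ X).symm
        (LinearMap.toContinuousLinearMap (b.flip q))
      map_add' := by
        intro q q'
        simp [map_add]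
      map_smul' := by
        intro c q
        simp [map_smul] }
  have hBt : ∀ (q : Y) (v : X), ⟪Bt q, v⟫ = b v q := by
    intro q v
    simp [Bt, InnerProductSpace.toDual_symm_apply]
  have hlow : ∀ q : Y, β * ‖q‖ ≤ ‖Bt q‖ := by
    intro q
    refine (hinfsup q).trans (Real.iSup_le ?_ (norm_nonneg _))
    rintro ⟨v, hv⟩
    rw [div_le_iff₀ (norm_pos_iff.mpr hv)]
    calc b v q = ⟪Bt q, v⟫ := (hBt q v).symm
      _ ≤ ‖Bt q‖ * ‖v‖ := real_inner_le_norm _ _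
  let Φ : Y →ₗ[ℝ] Y := (LinearMap.adjoint Bt).comp Bt
  have hΦ : ∀ q q' : Y, ⟪Φ q, q'⟫ = ⟪Bt q, Bt q'⟫ := by
    intro q q'
    simp [Φ, LinearMap.adjoint_inner_left]
  have hBtzero : ∀ q : Y, Bt q = 0 → q = 0 := by
    intro q hq
    have h := hlow q
    rw [hq, norm_zero] at h
    have : ‖q‖ ≤ 0 := by
      nlinarith [norm_nonneg q]
    simpa using le_antisymm this (norm_nonneg q)
  have hinj : Function.Injective Φ := by
    intro x y hxy
    have hsub : Φ (x - y) = 0 := by simp [map_sub, hxy]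
    have h0 : ⟪Φ (x - y), x - y⟫ = 0 := by rw [hsub]; simp
    rw [hΦ] at h0
    have : Bt (x - y) = 0 := by
      have := real_inner_self_eq_norm_sq (Bt (x - y))
      have hn : ‖Bt (x - y)‖ = 0 := by nlinarith [norm_nonneg (Bt (x - y))]
      exact norm_eq_zero.mp hn
    have := hBtzero _ this
    exact sub_eq_zero.mp this
  have hsurj : Function.Surjective Φ := (LinearMap.injective_iff_surjective).mp hinj
  obtain ⟨q₀, hq₀⟩ := hsurj ((InnerProductSpace.toDual ℝ Y).symm r2)
  refine ⟨Bt q₀, ?_, ?_⟩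
  · intro q
    have h1 : ⟪Φ q₀, q⟫ = r2 q := by
      rw [hq₀, InnerProductSpace.toDual_symm_apply]
    calc b (Bt q₀) q = ⟪Bt q, Bt q₀⟫ := (hBt q (Bt q₀)).symm
      _ = ⟪Bt q₀, Bt q⟫ := real_inner_comm _ _
      _ = ⟪Φ q₀, q⟫ := (hΦ q₀ q).symm
      _ = r2 q := h1
  · have hsq : ‖Bt q₀‖ ^ 2 = r2 q₀ := by
      have h1 : ⟪Φ q₀, q₀⟫ = r2 q₀ := by
        rw [hq₀, InnerProductSpace.toDual_symm_apply]
      rw [hΦ] at h1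
      rw [← h1, real_inner_self_eq_norm_sq]
    have hr2q : r2 q₀ ≤ ‖r2‖ * ‖q₀‖ := by
      calc r2 q₀ ≤ |r2 q₀| := le_abs_self _
        _ = ‖r2 q₀‖ := (Real.norm_eq_abs _).symm
        _ ≤ ‖r2‖ * ‖q₀‖ := r2.le_opNorm q₀
    have hq₀n : β * ‖q₀‖ ≤ ‖Bt q₀‖ := hlow q₀
    rcases eq_or_lt_of_le (norm_nonneg (Bt q₀)) with h0 | h0
    · rw [← h0]
      positivity
    · rw [le_div_iff₀ hβ]
      -- β * ‖Bt q₀‖^2 ≤ ‖r2‖ * (β * ‖q₀‖) ≤ ‖r2‖ * ‖Bt q₀‖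
      nlinarith [norm_nonneg r2, norm_nonneg q₀]

lemma young_aux (c d E : ℝ) (hd : 0 < d) : 2 * (c * E) - d * E ^ 2 ≤ c ^ 2 / d := by
  rw [le_div_iff₀ hd]
  nlinarith [sq_nonneg (d * E - c)]

set_option maxHeartbeats 1000000 in
/-- Single-time-step estimate in the nonsymmetric case (Proposition 2.1). -/
theorem stmt6 {X Y : Type*}
    [NormedAddCommGroup X] [InnerProductSpace ℝ X] [FiniteDimensional ℝ X]
    [NormedAddCommGroup Y] [InnerProductSpace ℝ Y] [FiniteDimensional ℝ Y]
    (b : X →ₗ[ℝ] Y →ₗ[ℝ] ℝ) (a m : X →ₗ[ℝ] X →ₗ[ℝ] ℝ)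
    (β γa αa γm Δt : ℝ) (hβ : 0 < β) (hαa : 0 < αa) (hΔt : 0 < Δt)
    (hinfsup : ∀ q : Y, β * ‖q‖ ≤ ⨆ v : {v : X // v ≠ 0}, b (v : X) q / ‖(v : X)‖)
    (habdd : ∀ u v : X, a u v ≤ γa * ‖u‖ * ‖v‖)
    (hacoer : ∀ v : X, αa * ‖v‖ ^ 2 ≤ a v v)
    (hmsym : ∀ u v : X, m u v = m v u)
    (hmpos : ∀ v : X, v ≠ 0 → 0 < m v v)
    (hmbdd : ∀ u v : X, m u v ≤ γm * ‖u‖ * ‖v‖)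
    (e e' : X) (p : Y) (r1 : X →L[ℝ] ℝ) (r2 : Y →L[ℝ] ℝ)
    (heq1 : ∀ v : X, (1 / Δt) * m (e - e') v + a e v + b v p = r1 v)
    (heq2 : ∀ q : Y, b e q = r2 q) :
    (1 / Δt) * (m e e - m e' e') + a e e ≤
      ‖r1‖ ^ 2 / αa + (2 / β) * (1 + γa / αa) * ‖r1‖ * ‖r2‖ +
        (γm / Δt + γa ^ 2 / αa) * ‖r2‖ ^ 2 / β ^ 2 := by
  rcases subsingleton_or_nontrivial X with hX | hX
  · -- trivial case: everything is zero
    have he : e = 0 := Subsingleton.elim _ _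
    have he' : e' = 0 := Subsingleton.elim _ _
    have hr1 : r1 = 0 := by
      ext v
      have : v = (0 : X) := Subsingleton.elim _ _
      simp [this]
    have hr2 : r2 = 0 := by
      ext q
      have := heq2 q
      rw [he] at this
      simpa using this.symm
    rw [he, he', hr1, hr2]
    simp
  · obtain ⟨v₀, hv₀⟩ := exists_ne (0 : X)
    have hv₀n : 0 < ‖v₀‖ := norm_pos_iff.mpr hv₀
    have hγa : 0 < γa := by
      have h1 := hacoer v₀
      have h2 := habdd v₀ v₀
      have h3 : ‖v₀‖ ^ 2 = ‖v₀‖ * ‖v₀‖ := sq ‖v₀‖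
      nlinarith [mul_pos hαa (mul_pos hv₀n hv₀n), mul_pos hv₀n hv₀n]
    have hγm : 0 < γm := by
      have h1 := hmpos v₀ hv₀
      have h2 := hmbdd v₀ v₀
      nlinarith [mul_pos hv₀n hv₀n]
    obtain ⟨w, hw1, hw2⟩ := exists_lift b β hβ hinfsup r2
    -- abbreviations
    set R1 := ‖r1‖ with hR1
    set ρ := ‖r2‖ / β with hρdef
    have hρ0 : 0 ≤ ρ := by positivity
    have hR10 : 0 ≤ R1 := norm_nonneg _
    have hE0 : 0 ≤ ‖e‖ := norm_nonneg _
    have hW0 : 0 ≤ ‖w‖ := norm_nonneg _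
    -- identity (i)
    have hi : m e e - m e' e' = 2 * m (e - e') e - m (e - e') (e - e') := by
      simp only [map_sub, LinearMap.sub_apply]
      linarith [hmsym e e']
    -- identity/positivity (ii)
    have hexp : m (e - e' - w) (e - e' - w)
        = m (e - e') (e - e') - 2 * m (e - e') w + m w w := by
      simp only [map_sub, LinearMap.sub_apply]
      linarith [hmsym w e, hmsym w e', hmsym e e']
    have hpos : 0 ≤ m (e - e' - w) (e - e' - w) := by
      rcases eq_or_ne (e - e' - w) 0 with h | h
      · rw [h]; simp
      · exact (hmpos _ h).le
    rw [hexp] at hpos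
    -- main identity for T
    have h1 := heq1 e
    have h2 := heq1 w
    have h3 := heq2 p
    have h4 := hw1 p
    have hT : (1 / Δt) * (m e e - m e' e') + a e e
        = 2 * r1 e - 2 * r1 w + (2 / Δt) * m (e - e') w + 2 * a e w
          - a e e - (1 / Δt) * (m (e - e') (e - e')) := by
      linear_combination (2 : ℝ) * h1 - 2 * h2 - 2 * h3 + 2 * h4 + (1 / Δt) * hi
    -- bound the m-cross terms
    have hΔt' : 0 < 1 / Δt := by positivity
    have hstep : (2 / Δt) * m (e - e') w - (1 / Δt) * (m (e - e') (e - e'))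
        ≤ (1 / Δt) * m w w := by
      have h0 : 0 ≤ (1 / Δt) * (m (e - e') (e - e') - 2 * m (e - e') w + m w w) :=
        mul_nonneg hΔt'.le hpos
      ring_nf at h0 ⊢
      linarith
    -- scalar bounds
    have hr1e : r1 e ≤ R1 * ‖e‖ := by
      calc r1 e ≤ |r1 e| := le_abs_self _
        _ = ‖r1 e‖ := (Real.norm_eq_abs _).symm
        _ ≤ R1 * ‖e‖ := r1.le_opNorm e
    have hr1w : -(r1 w) ≤ R1 * ‖w‖ := by
      have : |r1 w| ≤ R1 * ‖w‖ := by
        rw [← Real.norm_eq_abs]; exact r1.le_opNorm w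
      linarith [neg_abs_le (r1 w)]
    have haew : a e w ≤ γa * ‖e‖ * ‖w‖ := habdd e w
    have hacoe : αa * ‖e‖ ^ 2 ≤ a e e := hacoer e
    have hmww : m w w ≤ γm * ‖w‖ * ‖w‖ := hmbdd w w
    -- replace ‖w‖ by ρ
    have hB : (1 / Δt) * m w w ≤ γm * ρ ^ 2 / Δt := by
      have h1 : γm * ‖w‖ * ‖w‖ ≤ γm * ρ * ρ := by
        have h0 : ‖w‖ * ‖w‖ ≤ ρ * ρ := mul_le_mul hw2 hw2 hW0 hρ0
        calc γm * ‖w‖ * ‖w‖ = γm * (‖w‖ * ‖w‖) := by ring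
          _ ≤ γm * (ρ * ρ) := mul_le_mul_of_nonneg_left h0 hγm.le
          _ = γm * ρ * ρ := by ring
      have h2 : (1 / Δt) * m w w ≤ (1 / Δt) * (γm * ρ * ρ) := by
        apply mul_le_mul_of_nonneg_left (hmww.trans h1) hΔt'.le
      calc (1 / Δt) * m w w ≤ (1 / Δt) * (γm * ρ * ρ) := h2
        _ = γm * ρ ^ 2 / Δt := by ring
    have hA : -(2 * r1 w) ≤ 2 * (R1 * ρ) := by
      have := hr1w.trans (mul_le_mul_of_nonneg_left hw2 hR10)
      linarith
    have hC : a e w ≤ γa * ‖e‖ * ρ :=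
      haew.trans (mul_le_mul_of_nonneg_left hw2 (by positivity))
    -- Young step
    have hD : 2 * (R1 * ‖e‖) + 2 * (γa * ‖e‖ * ρ) - αa * ‖e‖ ^ 2
        ≤ (R1 + γa * ρ) ^ 2 / αa := by
      have := young_aux (R1 + γa * ρ) αa ‖e‖ hαa
      linarith
    -- rewrite RHS
    have hRHS : ‖r1‖ ^ 2 / αa + (2 / β) * (1 + γa / αa) * ‖r1‖ * ‖r2‖ +
        (γm / Δt + γa ^ 2 / αa) * ‖r2‖ ^ 2 / β ^ 2
        = (R1 + γa * ρ) ^ 2 / αa + 2 * (R1 * ρ) + γm * ρ ^ 2 / Δt := by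
      rw [hρdef, hR1]
      field_simp
      ring
    rw [hRHS, hT]
    linarith [hstep, hB, hA, hC, hD]
end

section
/- Under the hypotheses of the single-step estimate for the nonsymmetric case, the full a posteriori bound holds: let $(e^{u,j})_{j=0}^K \subseteq X$ with $e^{u,0} = 0$ and $(e^{p,j})_{j=1}^K \subseteq Y$ satisfy, for every $1 \leq j \leq K$, $\tfrac{1}{\Delta t}m(e^{u,j}-e^{u,j-1},v) + a(e^{u,j},v) + b(v,e^{p,j}) = r^{1,j}(v)$ for all $v \in X$ and $b(e^{u,j},q) = r^{2,j}(q)$ for all $q \in Y$. Then for every $1 \leq k \leq K$: $\|e^{u,k}\|_m^2 + \Delta t \sum_{j=1}^k a(e^{u,j},e^{u,j}) \leq \Delta t \sum_{j=1}^k \Big[\tfrac{\|r^{1,j}\|_{X'}^2}{\alpha_a} + \tfrac{2}{\beta}\big(1+\tfrac{\gamma_a}{\alpha_a}\big)\|r^{1,j}\|_{X'}\|r^{2,j}\|_{Y'} + \big(\tfrac{\gamma_m}{\Delta t} + \tfrac{\gamma_a^2}{\alpha_a}\big)\tfrac{\|r^{2,j}\|_{Y'}^2}{\beta^2}\Big]$.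 -/
/-!
Testing the momentum equation with `e^{u,j}` and using
`2 m(e - e', e) = ‖e‖²_m - ‖e'‖²_m + ‖e - e'‖²_m` together with the continuity equation gives
`‖e^{u,j}‖²_m - ‖e^{u,j-1}‖²_m + Δt a(e^{u,j}, e^{u,j})
  = 2 Δt (r¹(e^{u,j}) - r²(e^{p,j})) - ‖e^{u,j} - e^{u,j-1}‖²_m - Δt a(e^{u,j}, e^{u,j})`.
The inf-sup condition applied to the momentum equation bounds `β ‖e^{p,j}‖` by
`‖r¹‖ + γ_a ‖e^{u,j}‖ + √γ_m ‖e^{u,j} - e^{u,j-1}‖_m / Δt`, and Young's inequality absorbs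
`‖e^{u,j}‖` into the coercivity term and the increment into `‖e^{u,j} - e^{u,j-1}‖²_m`.
The resulting one-step estimate telescopes over `j`.
-/

open Finset

lemma iSup_div_norm_le {X : Type*} [NormedAddCommGroup X] (f : X → ℝ) {C : ℝ} (hC : 0 ≤ C)
    (hf : ∀ v, f v ≤ C * ‖v‖) : ⨆ v : {v : X // v ≠ 0}, f v / ‖(v : X)‖ ≤ C :=
  Real.iSup_le (fun v => (div_le_iff₀ (norm_pos_iff.mpr v.2)).2 (hf v)) hC

namespace LinearMap.BilinForm

variable {X : Type*}

lemma two_mul_apply_sub_eq [AddCommGroup X] [Module ℝ X] (m : LinearMap.BilinForm ℝ X)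
    (hsymm : ∀ u v, m u v = m v u) (u w : X) :
    2 * m (u - w) u = m u u - m w w + m (u - w) (u - w) := by
  simp only [map_sub, LinearMap.sub_apply, hsymm w u]
  ring

lemma abs_apply_le_of_apply_le_mul_norm [NormedAddCommGroup X] [NormedSpace ℝ X]
    (m : LinearMap.BilinForm ℝ X) (hsymm : ∀ u v, m u v = m v u) (hm : ∀ v, 0 ≤ m v v) {γ : ℝ}
    (hγ : 0 ≤ γ) (hbdd : ∀ u v, m u v ≤ γ * ‖u‖ * ‖v‖) (d v : X) :
    |m d v| ≤ √γ * √(m d d) * ‖v‖ := by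
  refine abs_le_of_sq_le_sq ?_ (by positivity)
  calc m d v ^ 2 = m d v * m v d := by rw [sq, hsymm v d]
    _ ≤ m d d * m v v := apply_mul_apply_le_of_forall_zero_le m hm d v
    _ ≤ m d d * (γ * ‖v‖ * ‖v‖) := mul_le_mul_of_nonneg_left (hbdd v v) (hm d)
    _ = (√γ * √(m d d) * ‖v‖) ^ 2 := by
      rw [mul_pow, mul_pow, Real.sq_sqrt hγ, Real.sq_sqrt (hm d)]; ring

lemma nonneg_of_apply_le_mul_norm [NormedAddCommGroup X] [Module ℝ X] [Nontrivial X]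
    (B : LinearMap.BilinForm ℝ X) (hB : ∀ v, 0 ≤ B v v) {γ : ℝ}
    (hbdd : ∀ u v, B u v ≤ γ * ‖u‖ * ‖v‖) : 0 ≤ γ := by
  obtain ⟨v, hv⟩ := exists_ne (0 : X)
  have hv' : 0 < ‖v‖ * ‖v‖ := by positivity
  nlinarith [hB v, hbdd v v]

end LinearMap.BilinForm

lemma add_sum_le_sum_of_sub_add_le {E A F : ℕ → ℝ} (hE : E 0 = 0) {K : ℕ}
    (h : ∀ j, 1 ≤ j → j ≤ K → E j - E (j - 1) + A j ≤ F j) :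
    ∀ k ≤ K, E k + ∑ j ∈ Icc 1 k, A j ≤ ∑ j ∈ Icc 1 k, F j
  | 0, _ => by simp [hE]
  | k + 1, hk => by
    have ih := add_sum_le_sum_of_sub_add_le hE h k (by omega)
    have hstep := h (k + 1) (by omega) hk
    rw [Nat.add_sub_cancel] at hstep
    rw [sum_Icc_succ_top (by omega), sum_Icc_succ_top (by omega)]
    linarith

lemma young_energy_bound {α β Δt γ R₁ R₂ U D P s : ℝ} (hα : 0 < α) (hβ : 0 < β) (hΔt : 0 < Δt)
    (hR₂ : 0 ≤ R₂) (hP : β * P ≤ R₁ + γ * U + s * D / Δt) :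
    2 * Δt * (R₁ * U + R₂ * P) - D ^ 2 - Δt * (α * U ^ 2) ≤
      Δt * (R₁ ^ 2 / α + (2 / β) * (1 + γ / α) * R₁ * R₂ +
        (s ^ 2 / Δt + γ ^ 2 / α) * R₂ ^ 2 / β ^ 2) := by
  have hPQ : R₂ * P ≤ R₂ * ((R₁ + γ * U + s * D / Δt) / β) :=
    mul_le_mul_of_nonneg_left ((le_div_iff₀ hβ).2 (by linarith)) hR₂
  have hgap : Δt * (R₁ ^ 2 / α + (2 / β) * (1 + γ / α) * R₁ * R₂ +
        (s ^ 2 / Δt + γ ^ 2 / α) * R₂ ^ 2 / β ^ 2) -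
      (2 * Δt * (R₁ * U + R₂ * ((R₁ + γ * U + s * D / Δt) / β)) - D ^ 2 - Δt * (α * U ^ 2)) =
      Δt * (α * U - (R₁ + γ * R₂ / β)) ^ 2 / α + (s * R₂ / β - D) ^ 2 := by
    field_simp
    ring
  have hsq : 0 ≤ Δt * (α * U - (R₁ + γ * R₂ / β)) ^ 2 / α + (s * R₂ / β - D) ^ 2 := by
    positivity
  have hPQ' := mul_le_mul_of_nonneg_left hPQ (by positivity : (0 : ℝ) ≤ 2 * Δt)
  linarith

section BackwardEuler

variable {X Y : Type*} [NormedAddCommGroup X] [NormedSpace ℝ X] [NormedAddCommGroup Y]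
  [NormedSpace ℝ Y] (b : X →ₗ[ℝ] Y →ₗ[ℝ] ℝ) (a m : X →ₗ[ℝ] X →ₗ[ℝ] ℝ)
  {β γa αa γm Δt : ℝ} {u w : X} {p : Y} {f : X →L[ℝ] ℝ} {g : Y →L[ℝ] ℝ}

lemma mul_norm_pressure_le_of_infSup (hΔt : 0 < Δt) (hγa : 0 ≤ γa) (hγm : 0 ≤ γm)
    (hinfsup : β * ‖p‖ ≤ ⨆ v : {v : X // v ≠ 0}, b (v : X) p / ‖(v : X)‖)
    (habdd : ∀ u v : X, a u v ≤ γa * ‖u‖ * ‖v‖)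
    (hmsym : ∀ u v : X, m u v = m v u) (hm : ∀ v : X, 0 ≤ m v v)
    (hmbdd : ∀ u v : X, m u v ≤ γm * ‖u‖ * ‖v‖)
    (h₁ : ∀ v : X, (1 / Δt) * m (u - w) v + a u v + b v p = f v) :
    β * ‖p‖ ≤ ‖f‖ + γa * ‖u‖ + √γm * √(m (u - w) (u - w)) / Δt := by
  have hC : 0 ≤ ‖f‖ + γa * ‖u‖ + √γm * √(m (u - w) (u - w)) / Δt :=
    add_nonneg (add_nonneg (norm_nonneg f) (mul_nonneg hγa (norm_nonneg u))) (by positivity)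
  refine hinfsup.trans (iSup_div_norm_le (fun v => b v p) hC fun v => ?_)
  have hf : f v ≤ ‖f‖ * ‖v‖ := (le_abs_self _).trans (f.le_opNorm v)
  have ha : -a u v ≤ γa * ‖u‖ * ‖v‖ := by simpa using habdd u (-v)
  have hmv : -(1 / Δt * m (u - w) v) ≤ √γm * √(m (u - w) (u - w)) / Δt * ‖v‖ := by
    have h := LinearMap.BilinForm.abs_apply_le_of_apply_le_mul_norm m hmsym hm hγm hmbdd (u - w) v
    calc -(1 / Δt * m (u - w) v) = -m (u - w) v / Δt := by ring
      _ ≤ √γm * √(m (u - w) (u - w)) * ‖v‖ / Δt := by gcongr; exact (neg_le_abs _).trans h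
      _ = √γm * √(m (u - w) (u - w)) / Δt * ‖v‖ := by ring
  have hbv : b v p = f v - (1 / Δt) * m (u - w) v - a u v := by linarith [h₁ v]
  rw [hbv]
  linarith

theorem energy_step_le (hβ : 0 < β) (hαa : 0 < αa) (hΔt : 0 < Δt) (hγa : 0 ≤ γa) (hγm : 0 ≤ γm)
    (hinfsup : β * ‖p‖ ≤ ⨆ v : {v : X // v ≠ 0}, b (v : X) p / ‖(v : X)‖)
    (habdd : ∀ u v : X, a u v ≤ γa * ‖u‖ * ‖v‖) (hacoer : ∀ v : X, αa * ‖v‖ ^ 2 ≤ a v v)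
    (hmsym : ∀ u v : X, m u v = m v u) (hm : ∀ v : X, 0 ≤ m v v)
    (hmbdd : ∀ u v : X, m u v ≤ γm * ‖u‖ * ‖v‖)
    (h₁ : ∀ v : X, (1 / Δt) * m (u - w) v + a u v + b v p = f v) (h₂ : b u p = g p) :
    m u u - m w w + Δt * a u u ≤
      Δt * (‖f‖ ^ 2 / αa + (2 / β) * (1 + γa / αa) * ‖f‖ * ‖g‖ +
        (γm / Δt + γa ^ 2 / αa) * ‖g‖ ^ 2 / β ^ 2) := by
  have henergy : m u u - m w w + Δt * a u u =
      2 * Δt * (f u - g p) - m (u - w) (u - w) - Δt * a u u := by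
    have hmu : m (u - w) u = Δt * (f u - a u u - g p) := by
      have := h₁ u
      rw [h₂] at this
      field_simp at this ⊢
      linarith
    linarith [LinearMap.BilinForm.two_mul_apply_sub_eq m hmsym u w]
  have hf : f u ≤ ‖f‖ * ‖u‖ := (le_abs_self _).trans (f.le_opNorm u)
  have hg : -g p ≤ ‖g‖ * ‖p‖ := (neg_le_abs _).trans (g.le_opNorm p)
  have hP := mul_norm_pressure_le_of_infSup b a m hΔt hγa hγm hinfsup habdd hmsym hm hmbdd h₁
  have key := young_energy_bound hαa hβ hΔt (norm_nonneg g) hP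
  rw [Real.sq_sqrt hγm, Real.sq_sqrt (hm _)] at key
  have hres := mul_le_mul_of_nonneg_left (add_le_add hf hg) (by positivity : (0 : ℝ) ≤ 2 * Δt)
  have hcoer := mul_le_mul_of_nonneg_left (hacoer u) hΔt.le
  linarith

end BackwardEuler

theorem stmt7_general {X Y : Type*}
    [NormedAddCommGroup X] [InnerProductSpace ℝ X]
    [NormedAddCommGroup Y] [InnerProductSpace ℝ Y]
    (b : X →ₗ[ℝ] Y →ₗ[ℝ] ℝ) (a m : X →ₗ[ℝ] X →ₗ[ℝ] ℝ)
    (β γa αa γm Δt : ℝ) (hβ : 0 < β) (hαa : 0 < αa) (hΔt : 0 < Δt)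
    (hinfsup : ∀ q : Y, β * ‖q‖ ≤ ⨆ v : {v : X // v ≠ 0}, b (v : X) q / ‖(v : X)‖)
    (habdd : ∀ u v : X, a u v ≤ γa * ‖u‖ * ‖v‖)
    (hacoer : ∀ v : X, αa * ‖v‖ ^ 2 ≤ a v v)
    (hmsym : ∀ u v : X, m u v = m v u)
    (hmpos : ∀ v : X, v ≠ 0 → 0 < m v v)
    (hmbdd : ∀ u v : X, m u v ≤ γm * ‖u‖ * ‖v‖)
    (K : ℕ) (eu : ℕ → X) (ep : ℕ → Y)
    (r1 : ℕ → X →L[ℝ] ℝ) (r2 : ℕ → Y →L[ℝ] ℝ)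
    (heu0 : eu 0 = 0)
    (heq1 : ∀ j : ℕ, 1 ≤ j → j ≤ K → ∀ v : X,
      (1 / Δt) * m (eu j - eu (j - 1)) v + a (eu j) v + b v (ep j) = r1 j v)
    (heq2 : ∀ j : ℕ, 1 ≤ j → j ≤ K → ∀ q : Y, b (eu j) q = r2 j q) :
    ∀ k : ℕ, 1 ≤ k → k ≤ K →
      m (eu k) (eu k) + Δt * ∑ j ∈ Finset.Icc 1 k, a (eu j) (eu j) ≤
        Δt * ∑ j ∈ Finset.Icc 1 k,
          (‖r1 j‖ ^ 2 / αa + (2 / β) * (1 + γa / αa) * ‖r1 j‖ * ‖r2 j‖ +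
            (γm / Δt + γa ^ 2 / αa) * ‖r2 j‖ ^ 2 / β ^ 2) := by
  intro k _ hkK
  have hm : ∀ v, 0 ≤ m v v := fun v => by
    rcases eq_or_ne v 0 with rfl | hv
    · simp
    · exact (hmpos v hv).le
  rw [mul_sum, mul_sum]
  refine add_sum_le_sum_of_sub_add_le (E := fun j => m (eu j) (eu j)) (by simp [heu0])
    (fun j hj hjK => ?_) k hkK
  -- on `X = 0` the constants `γa`, `γm` may be negative, but both sides vanish
  rcases subsingleton_or_nontrivial X with hX | hX
  · have hr1 : r1 j = 0 := by ext v; simp [Subsingleton.elim v 0]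
    have hr2 : r2 j = 0 := by ext q; simp [← heq2 j hj hjK q, Subsingleton.elim (eu j) 0]
    simp [Subsingleton.elim (eu _) 0, hr1, hr2]
  · have hγa := LinearMap.BilinForm.nonneg_of_apply_le_mul_norm a
      (fun v => (by positivity : 0 ≤ αa * ‖v‖ ^ 2).trans (hacoer v)) habdd
    have hγm := LinearMap.BilinForm.nonneg_of_apply_le_mul_norm m hm hmbdd
    exact energy_step_le b a m hβ hαa hΔt hγa hγm (hinfsup _) habdd hacoer hmsym hm hmbdd
      (heq1 j hj hjK) (heq2 j hj hjK _)

/-- Proposition 2.1: full a posteriori error bound, nonsymmetric case. -/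
theorem stmt7 {X Y : Type*}
    [NormedAddCommGroup X] [InnerProductSpace ℝ X] [FiniteDimensional ℝ X]
    [NormedAddCommGroup Y] [InnerProductSpace ℝ Y] [FiniteDimensional ℝ Y]
    (b : X →ₗ[ℝ] Y →ₗ[ℝ] ℝ) (a m : X →ₗ[ℝ] X →ₗ[ℝ] ℝ)
    (β γa αa γm Δt : ℝ) (hβ : 0 < β) (hαa : 0 < αa) (hΔt : 0 < Δt)
    (hinfsup : ∀ q : Y, β * ‖q‖ ≤ ⨆ v : {v : X // v ≠ 0}, b (v : X) q / ‖(v : X)‖)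
    (habdd : ∀ u v : X, a u v ≤ γa * ‖u‖ * ‖v‖)
    (hacoer : ∀ v : X, αa * ‖v‖ ^ 2 ≤ a v v)
    (hmsym : ∀ u v : X, m u v = m v u)
    (hmpos : ∀ v : X, v ≠ 0 → 0 < m v v)
    (hmbdd : ∀ u v : X, m u v ≤ γm * ‖u‖ * ‖v‖)
    (K : ℕ) (eu : ℕ → X) (ep : ℕ → Y)
    (r1 : ℕ → X →L[ℝ] ℝ) (r2 : ℕ → Y →L[ℝ] ℝ)
    (heu0 : eu 0 = 0)
    (heq1 : ∀ j : ℕ, 1 ≤ j → j ≤ K → ∀ v : X,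
      (1 / Δt) * m (eu j - eu (j - 1)) v + a (eu j) v + b v (ep j) = r1 j v)
    (heq2 : ∀ j : ℕ, 1 ≤ j → j ≤ K → ∀ q : Y, b (eu j) q = r2 j q) :
    ∀ k : ℕ, 1 ≤ k → k ≤ K →
      m (eu k) (eu k) + Δt * ∑ j ∈ Finset.Icc 1 k, a (eu j) (eu j) ≤
        Δt * ∑ j ∈ Finset.Icc 1 k,
          (‖r1 j‖ ^ 2 / αa + (2 / β) * (1 + γa / αa) * ‖r1 j‖ * ‖r2 j‖ +
            (γm / Δt + γa ^ 2 / αa) * ‖r2 j‖ ^ 2 / β ^ 2) :=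
  stmt7_general b a m β γa αa γm Δt hβ hαa hΔt hinfsup habdd hacoer hmsym hmpos hmbdd K eu ep r1 r2
    heu0 heq1 heq2
end

section
/- Let $X$, $Y$ be finite-dimensional real inner product spaces, $a : X \times X \to \mathbb{R}$ coercive with constant $\alpha_a > 0$, $c : Y \times Y \to \mathbb{R}$ coercive with constant $\alpha_c > 0$, $b : X \times Y \to \mathbb{R}$ bilinear, $m$ an inner product on $X$, $\varepsilon > 0$, $\Delta t > 0$. Suppose $e^u, e^{u\prime} \in X$, $e^p \in Y$, $r^1 \in X'$, $r^2 \in Y'$ satisfy $\tfrac{1}{\Delta t}m(e^u - e^{u\prime}, v) + a(e^u, v) + b(v, e^p) = r^1(v)$ for all $v \in X$ and $b(e^u, q) - \varepsilon\, c(e^p, q) = r^2(q)$ for all $q \in Y$. Then $\tfrac{1}{\Delta t}(\|e^u\|_m^2 - \|e^{u\prime}\|_m^2) + a(e^u,e^u) + \varepsilon\, c(e^p,e^p) \leq \tfrac{\|r^1\|_{X'}^2}{\alpha_a} + \tfrac{\|r^2\|_{Y'}^2}{\varepsilon \alpha_c}$. -/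
/-- Single-time-step estimate for the penalty method (proof of Proposition 2.3). -/
theorem stmt10 {X Y : Type*}
    [NormedAddCommGroup X] [InnerProductSpace ℝ X] [FiniteDimensional ℝ X]
    [NormedAddCommGroup Y] [InnerProductSpace ℝ Y] [FiniteDimensional ℝ Y]
    (a m : X →ₗ[ℝ] X →ₗ[ℝ] ℝ) (c : Y →ₗ[ℝ] Y →ₗ[ℝ] ℝ) (b : X →ₗ[ℝ] Y →ₗ[ℝ] ℝ)
    (αa αc ε Δt : ℝ) (hαa : 0 < αa) (hαc : 0 < αc) (hε : 0 < ε) (hΔt : 0 < Δt)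
    (hacoer : ∀ v : X, αa * ‖v‖ ^ 2 ≤ a v v)
    (hccoer : ∀ q : Y, αc * ‖q‖ ^ 2 ≤ c q q)
    (hmsym : ∀ u v : X, m u v = m v u)
    (hmpos : ∀ v : X, v ≠ 0 → 0 < m v v)
    (eu eu' : X) (ep : Y) (r1 : X →L[ℝ] ℝ) (r2 : Y →L[ℝ] ℝ)
    (heq1 : ∀ v : X, (1 / Δt) * m (eu - eu') v + a eu v + b v ep = r1 v)
    (heq2 : ∀ q : Y, b eu q - ε * c ep q = r2 q) :
    (1 / Δt) * (m eu eu - m eu' eu') + a eu eu + ε * c ep ep ≤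
      ‖r1‖ ^ 2 / αa + ‖r2‖ ^ 2 / (ε * αc) := by
  have h1 := heq1 eu
  have h2 := heq2 ep
  have hE : (1 / Δt) * m (eu - eu') eu + a eu eu + ε * c ep ep
      = r1 eu - r2 ep := by linarith
  have hm0 : 0 ≤ m (eu - eu') (eu - eu') := by
    rcases eq_or_ne (eu - eu') 0 with h | h
    · simp [h]
    · exact (hmpos _ h).le
  have hexp : m (eu - eu') (eu - eu')
      = m eu eu - 2 * m eu' eu + m eu' eu' := by
    simp [map_sub, LinearMap.sub_apply, hmsym eu eu']; ring
  have hexp2 : m (eu - eu') eu = m eu eu - m eu' eu := by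
    simp [map_sub, LinearMap.sub_apply]
  have hkey : m eu eu - m eu' eu' ≤ 2 * m (eu - eu') eu := by
    nlinarith [hm0, hexp, hexp2]
  have hr1 : r1 eu ≤ ‖r1‖ * ‖eu‖ := by
    calc r1 eu ≤ |r1 eu| := le_abs_self _
    _ = ‖r1 eu‖ := (Real.norm_eq_abs _).symm
    _ ≤ ‖r1‖ * ‖eu‖ := r1.le_opNorm eu
  have hr2 : -(r2 ep) ≤ ‖r2‖ * ‖ep‖ := by
    calc -(r2 ep) ≤ |r2 ep| := neg_le_abs _
    _ = ‖r2 ep‖ := (Real.norm_eq_abs _).symm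
    _ ≤ ‖r2‖ * ‖ep‖ := r2.le_opNorm ep
  have hy1 : 2 * (‖r1‖ * ‖eu‖) ≤ αa * ‖eu‖ ^ 2 + ‖r1‖ ^ 2 / αa := by
    have h := sq_nonneg (‖r1‖ - αa * ‖eu‖)
    have : ‖r1‖ ^ 2 - 2 * αa * (‖r1‖ * ‖eu‖) + αa ^ 2 * ‖eu‖ ^ 2 ≥ 0 := by nlinarith
    have hd : ‖r1‖ ^ 2 / αa * αa = ‖r1‖ ^ 2 := div_mul_cancel₀ _ hαa.ne'
    nlinarith
  have hy2 : 2 * (‖r2‖ * ‖ep‖) ≤ ε * αc * ‖ep‖ ^ 2 + ‖r2‖ ^ 2 / (ε * αc) := by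
    have hεc : 0 < ε * αc := mul_pos hε hαc
    have h := sq_nonneg (‖r2‖ - ε * αc * ‖ep‖)
    have hd : ‖r2‖ ^ 2 / (ε * αc) * (ε * αc) = ‖r2‖ ^ 2 := div_mul_cancel₀ _ hεc.ne'
    nlinarith
  have ha := hacoer eu
  have hc := hccoer ep
  have hΔ : 0 < 1 / Δt := by positivity
  have hstep : (1 / Δt) * (m eu eu - m eu' eu')
      ≤ 2 * (r1 eu - r2 ep) - 2 * (a eu eu) - 2 * (ε * c ep ep) := by
    have h3 := mul_le_mul_of_nonneg_left hkey hΔ.le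
    have h4 : (1 / Δt) * (2 * m (eu - eu') eu)
        = 2 * ((1 / Δt) * m (eu - eu') eu) := by ring
    linarith
  have hεc : ε * (αc * ‖ep‖ ^ 2) ≤ ε * c ep ep :=
    mul_le_mul_of_nonneg_left hc hε.le
  linarith [hstep, hr1, hr2, hy1, hy2, ha, hεc]
end

section
/- Under the penalty-method hypotheses, the full time-accumulated a posteriori bound holds: let $(e^{u,j})_{j=0}^K \subseteq X$ with $e^{u,0} = 0$, $(e^{p,j})_{j=1}^K \subseteq Y$, and suppose for each $1 \leq j \leq K$: $\tfrac{1}{\Delta t}m(e^{u,j}-e^{u,j-1},v) + a(e^{u,j},v) + b(v,e^{p,j}) = r^{1,j}(v)$ for all $v \in X$, and $b(e^{u,j},q) - \varepsilon\, c(e^{p,j},q) = r^{2,j}(q)$ for all $q \in Y$. Then for every $1 \leq k \leq K$: $\|e^{u,k}\|_m^2 + \Delta t\sum_{j=1}^k \big(a(e^{u,j},e^{u,j}) + \varepsilon\, c(e^{p,j},e^{p,j})\big) \leq \Delta t \sum_{j=1}^k \Big(\tfrac{\|r^{1,j}\|_{X'}^2}{\alpha_a} + \tfrac{\|r^{2,j}\|_{Y'}^2}{\varepsilon\alpha_c}\Big)$.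 -/
/-!
Testing the velocity equation with `e^{u,j}` and the penalized constraint with `e^{p,j}` and
subtracting cancels the coupling term `b(e^{u,j}, e^{p,j})`. The discrete time derivative is
bounded below by the difference of the energies `‖e^{u,j}‖_m² - ‖e^{u,j-1}‖_m²` (polarization),
and Young's inequality together with coercivity absorbs half of `a` and `ε c` into the left-hand
side. Summing the resulting one-step energy inequality over `j` telescopes.
-/

open Finset

lemma mul_le_sq_div_add_mul_sq {x y α : ℝ} (hα : 0 < α) :
    x * y ≤ (x ^ 2 / α + α * y ^ 2) / 2 := by
  have hsq : 0 ≤ (x - α * y) ^ 2 / α := by positivity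
  have hexpand : (x - α * y) ^ 2 / α = x ^ 2 / α + α * y ^ 2 - 2 * (x * y) := by
    field_simp
    ring
  linarith

lemma ContinuousLinearMap.apply_le_of_coercive {E : Type*} [SeminormedAddCommGroup E]
    [NormedSpace ℝ E] (f : E →L[ℝ] ℝ) {α A : ℝ} (hα : 0 < α) {v : E}
    (hv : α * ‖v‖ ^ 2 ≤ A) : f v ≤ (‖f‖ ^ 2 / α + A) / 2 :=
  calc f v ≤ ‖f‖ * ‖v‖ := (le_abs_self _).trans (f.le_opNorm v)
    _ ≤ (‖f‖ ^ 2 / α + α * ‖v‖ ^ 2) / 2 := mul_le_sq_div_add_mul_sq hα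
    _ ≤ (‖f‖ ^ 2 / α + A) / 2 := by linarith

lemma LinearMap.sub_le_two_mul_apply_sub_of_symm {R M : Type*} [CommRing R] [LinearOrder R]
    [IsStrictOrderedRing R] [AddCommGroup M] [Module R M] (m : M →ₗ[R] M →ₗ[R] R)
    (hsym : ∀ u v, m u v = m v u) (hnonneg : ∀ v, 0 ≤ m v v) (u w : M) :
    m u u - m w w ≤ 2 * m (u - w) u := by
  have hdiff := hnonneg (u - w)
  simp only [map_sub, LinearMap.sub_apply] at hdiff ⊢
  linarith [hsym u w]

lemma add_sum_Icc_le_of_forall_sub_add_le {G : Type*} [AddCommGroup G] [PartialOrder G]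
    [IsOrderedAddMonoid G] {d s t : ℕ → G} {k : ℕ}
    (h : ∀ j, 1 ≤ j → j ≤ k → d j - d (j - 1) + s j ≤ t j) :
    d k + ∑ j ∈ Icc 1 k, s j ≤ d 0 + ∑ j ∈ Icc 1 k, t j := by
  induction k with
  | zero => simp
  | succ k ih =>
    have hstep := h (k + 1) (by omega) le_rfl
    have hprev := ih fun j hj1 hjk => h j hj1 (by omega)
    rw [sum_Icc_succ_top (by omega), sum_Icc_succ_top (by omega)]
    calc d (k + 1) + (∑ j ∈ Icc 1 k, s j + s (k + 1))
        = (d (k + 1) - d (k + 1 - 1) + s (k + 1)) + (d k + ∑ j ∈ Icc 1 k, s j) := by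
          simp only [Nat.add_sub_cancel]
          abel
      _ ≤ t (k + 1) + (d 0 + ∑ j ∈ Icc 1 k, t j) := add_le_add hstep hprev
      _ = d 0 + (∑ j ∈ Icc 1 k, t j + t (k + 1)) := by abel

section EnergyStep

variable {X Y : Type*} [NormedAddCommGroup X] [NormedSpace ℝ X]
  [NormedAddCommGroup Y] [NormedSpace ℝ Y]
  (a m : X →ₗ[ℝ] X →ₗ[ℝ] ℝ) (c : Y →ₗ[ℝ] Y →ₗ[ℝ] ℝ) (b : X →ₗ[ℝ] Y →ₗ[ℝ] ℝ)

lemma penalty_energy_step {αa αc ε Δt : ℝ} (hαa : 0 < αa) (hαc : 0 < αc) (hε : 0 < ε)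
    (hΔt : 0 < Δt) (hacoer : ∀ v : X, αa * ‖v‖ ^ 2 ≤ a v v)
    (hccoer : ∀ q : Y, αc * ‖q‖ ^ 2 ≤ c q q) (hmsym : ∀ u v : X, m u v = m v u)
    (hmnonneg : ∀ v : X, 0 ≤ m v v) {u w : X} {p : Y} (f : X →L[ℝ] ℝ) (g : Y →L[ℝ] ℝ)
    (hmom : ∀ v : X, (1 / Δt) * m (u - w) v + a u v + b v p = f v)
    (hpen : ∀ q : Y, b u q - ε * c p q = g q) :
    m u u - m w w + Δt * (a u u + ε * c p p) ≤
      Δt * (‖f‖ ^ 2 / αa + ‖g‖ ^ 2 / (ε * αc)) := by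
  have henergy : m (u - w) u + Δt * (a u u + ε * c p p) = Δt * (f u - g p) := by
    rw [← hmom u, ← hpen p]
    field_simp
    ring
  have hpolar := m.sub_le_two_mul_apply_sub_of_symm hmsym hmnonneg u w
  have hf : f u ≤ (‖f‖ ^ 2 / αa + a u u) / 2 := f.apply_le_of_coercive hαa (hacoer u)
  have hg : (-g) p ≤ (‖-g‖ ^ 2 / (ε * αc) + ε * c p p) / 2 := by
    refine (-g).apply_le_of_coercive (by positivity) ?_
    rw [mul_assoc]
    exact mul_le_mul_of_nonneg_left (hccoer p) hε.le
  rw [neg_apply, norm_neg] at hg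
  have hsum := mul_le_mul_of_nonneg_left (add_le_add hf hg) hΔt.le
  linarith

end EnergyStep

theorem stmt11_general {X Y : Type*}
    [NormedAddCommGroup X] [InnerProductSpace ℝ X]
    [NormedAddCommGroup Y] [InnerProductSpace ℝ Y]
    (a m : X →ₗ[ℝ] X →ₗ[ℝ] ℝ) (c : Y →ₗ[ℝ] Y →ₗ[ℝ] ℝ) (b : X →ₗ[ℝ] Y →ₗ[ℝ] ℝ)
    (αa αc ε Δt : ℝ) (hαa : 0 < αa) (hαc : 0 < αc) (hε : 0 < ε) (hΔt : 0 < Δt)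
    (hacoer : ∀ v : X, αa * ‖v‖ ^ 2 ≤ a v v)
    (hccoer : ∀ q : Y, αc * ‖q‖ ^ 2 ≤ c q q)
    (hmsym : ∀ u v : X, m u v = m v u)
    (hmpos : ∀ v : X, v ≠ 0 → 0 < m v v)
    (K : ℕ) (eu : ℕ → X) (ep : ℕ → Y)
    (r1 : ℕ → X →L[ℝ] ℝ) (r2 : ℕ → Y →L[ℝ] ℝ)
    (heu0 : eu 0 = 0)
    (heq1 : ∀ j : ℕ, 1 ≤ j → j ≤ K → ∀ v : X,
      (1 / Δt) * m (eu j - eu (j - 1)) v + a (eu j) v + b v (ep j) = r1 j v)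
    (heq2 : ∀ j : ℕ, 1 ≤ j → j ≤ K → ∀ q : Y,
      b (eu j) q - ε * c (ep j) q = r2 j q) :
    ∀ k : ℕ, 1 ≤ k → k ≤ K →
      m (eu k) (eu k) +
          Δt * ∑ j ∈ Finset.Icc 1 k, (a (eu j) (eu j) + ε * c (ep j) (ep j)) ≤
        Δt * ∑ j ∈ Finset.Icc 1 k, (‖r1 j‖ ^ 2 / αa + ‖r2 j‖ ^ 2 / (ε * αc)) := by
  intro k _ hkK
  have hmnonneg (v : X) : 0 ≤ m v v := by
    rcases eq_or_ne v 0 with rfl | hv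
    · simp
    · exact (hmpos v hv).le
  have htelescope := add_sum_Icc_le_of_forall_sub_add_le (k := k)
    (d := fun j => m (eu j) (eu j)) fun j hj1 hjk =>
      penalty_energy_step a m c b hαa hαc hε hΔt hacoer hccoer hmsym hmnonneg (r1 j) (r2 j)
        (heq1 j hj1 (hjk.trans hkK)) (heq2 j hj1 (hjk.trans hkK))
  simpa only [heu0, map_zero, LinearMap.zero_apply, zero_add, Finset.mul_sum] using htelescope

/-- Proposition 2.3: full time-accumulated a posteriori bound for the penalty method. -/
theorem stmt11 {X Y : Type*}
    [NormedAddCommGroup X] [InnerProductSpace ℝ X] [FiniteDimensional ℝ X]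
    [NormedAddCommGroup Y] [InnerProductSpace ℝ Y] [FiniteDimensional ℝ Y]
    (a m : X →ₗ[ℝ] X →ₗ[ℝ] ℝ) (c : Y →ₗ[ℝ] Y →ₗ[ℝ] ℝ) (b : X →ₗ[ℝ] Y →ₗ[ℝ] ℝ)
    (αa αc ε Δt : ℝ) (hαa : 0 < αa) (hαc : 0 < αc) (hε : 0 < ε) (hΔt : 0 < Δt)
    (hacoer : ∀ v : X, αa * ‖v‖ ^ 2 ≤ a v v)
    (hccoer : ∀ q : Y, αc * ‖q‖ ^ 2 ≤ c q q)
    (hmsym : ∀ u v : X, m u v = m v u)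
    (hmpos : ∀ v : X, v ≠ 0 → 0 < m v v)
    (K : ℕ) (eu : ℕ → X) (ep : ℕ → Y)
    (r1 : ℕ → X →L[ℝ] ℝ) (r2 : ℕ → Y →L[ℝ] ℝ)
    (heu0 : eu 0 = 0)
    (heq1 : ∀ j : ℕ, 1 ≤ j → j ≤ K → ∀ v : X,
      (1 / Δt) * m (eu j - eu (j - 1)) v + a (eu j) v + b v (ep j) = r1 j v)
    (heq2 : ∀ j : ℕ, 1 ≤ j → j ≤ K → ∀ q : Y,
      b (eu j) q - ε * c (ep j) q = r2 j q) :
    ∀ k : ℕ, 1 ≤ k → k ≤ K →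
      m (eu k) (eu k) +
          Δt * ∑ j ∈ Finset.Icc 1 k, (a (eu j) (eu j) + ε * c (ep j) (ep j)) ≤
        Δt * ∑ j ∈ Finset.Icc 1 k, (‖r1 j‖ ^ 2 / αa + ‖r2 j‖ ^ 2 / (ε * αc)) :=
  stmt11_general a m c b αa αc ε Δt hαa hαc hε hΔt hacoer hccoer hmsym hmpos K eu ep r1 r2 heu0 heq1
    heq2
end
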